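/- Let a : ℕ → ℝ be a bounded sequence whose Birkhoff averages B_n diverge, with cluster set [α_0, β_0]. Suppose that for every γ ∈ [α_0, β_0] there exists ε > 0 such that limsup_{i→∞} n_{i+1}(γ, ε) / n_i(γ, ε) = ∞. Then the intersection ⋂_{k≥0} [α_k, β_k] is a nondegenerate interval, i.e. sup_k α_k < inf_k β_k (type B2). -/

import Mathlib

open Filter Topology

/-- Birkhoff averages: `birk a n = (1/n) * ∑_{i=0}^{n-1} a i` (junk value `0` at `n = 0`). -/
noncomputable def birk (a : ℕ → ℝ) (n : ℕ) : ℝ := (∑ i ∈ Finset.range n, a i) / n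

/-- Iterated Hölder means of a sequence `b` (indexed from 1):
`holderMeans b 0 n = b n` and `holderMeans b (k+1) n = (1/n) * ∑_{i=1}^n holderMeans b k i`. -/
noncomputable def holderMeans (b : ℕ → ℝ) : ℕ → ℕ → ℝ
  | 0, n => b n
  | k+1, n => (∑ i ∈ Finset.Icc 1 n, holderMeans b k i) / n

/-- Return times `n_i(γ, ε)`: the increasing enumeration (0-indexed) of
`{n ≥ 1 : γ - ε < B n < γ + ε}`. -/
noncomputable def returnTimes (B : ℕ → ℝ) (γ ε : ℝ) (i : ℕ) : ℕ :=
  Nat.nth (fun n => 1 ≤ n ∧ γ - ε < B n ∧ B n < γ + ε) i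

open Finset

/-! If the Birkhoff averages return to the band `(γ - ε, γ + ε)`, with `γ = sup_k α_k`, only along
times with unbounded ratios, then for large times the band is crossed in no single step (the
increments of `B` are `O(1/n)`), so `B` spends arbitrarily long stretches `(p, R p]` entirely above
`γ + ε` or entirely below `γ - ε`. Cesàro averaging preserves such stretches up to an arbitrarily
small loss, once the stretch start is pushed from `p` to `M p`. Stretches above give
`β_k ≥ γ + ε > γ` for every `k`; stretches below would give `α_k ≤ γ - ε` for every `k`,
contradicting `γ = sup_k α_k`. -/

noncomputable def cesaroMean (u : ℕ → ℝ) (n : ℕ) : ℝ := (∑ i ∈ Icc 1 n, u i) / n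

lemma holderMeans_succ (b : ℕ → ℝ) (k : ℕ) :
    holderMeans b (k + 1) = cesaroMean (holderMeans b k) := rfl

lemma abs_sum_div_card_le {ι : Type*} {s : Finset ι} {f : ι → ℝ} {C : ℝ} (hC : 0 ≤ C)
    (hf : ∀ i ∈ s, |f i| ≤ C) : |(∑ i ∈ s, f i) / #s| ≤ C := by
  rw [← expect_eq_sum_div_card]
  rcases s.eq_empty_or_nonempty with rfl | hs
  · simpa using hC
  · exact (abs_expect_le _ _).trans (expect_le hs hf)

lemma isBoundedUnder_le_and_ge_of_abs_le {ι : Type*} {l : Filter ι} {u : ι → ℝ} {C : ℝ}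
    (hu : ∀ i, |u i| ≤ C) : IsBoundedUnder (· ≤ ·) l u ∧ IsBoundedUnder (· ≥ ·) l u :=
  isBoundedUnder_le_abs.1 (isBoundedUnder_of ⟨C, hu⟩)

lemma abs_birk_le {a : ℕ → ℝ} {C : ℝ} (ha : ∀ n, |a n| ≤ C) (n : ℕ) : |birk a n| ≤ C := by
  simpa [birk] using
    abs_sum_div_card_le (s := range n) ((abs_nonneg _).trans (ha 0)) fun i _ => ha i

lemma abs_cesaroMean_le {u : ℕ → ℝ} {C : ℝ} (hu : ∀ n, |u n| ≤ C) (n : ℕ) :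
    |cesaroMean u n| ≤ C := by
  simpa [cesaroMean] using
    abs_sum_div_card_le (s := Icc 1 n) ((abs_nonneg _).trans (hu 0)) fun i _ => hu i

lemma abs_holderMeans_le {b : ℕ → ℝ} {C : ℝ} (hb : ∀ n, |b n| ≤ C) (k n : ℕ) :
    |holderMeans b k n| ≤ C := by
  induction k generalizing n with
  | zero => exact hb n
  | succ k ih => exact abs_cesaroMean_le ih n

lemma cesaroMean_neg (u : ℕ → ℝ) : cesaroMean (fun n => -u n) = fun n => -cesaroMean u n := by
  ext n
  simp [cesaroMean, neg_div]

lemma holderMeans_neg (b : ℕ → ℝ) (k : ℕ) :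
    holderMeans (fun n => -b n) k = fun n => -holderMeans b k n := by
  induction k with
  | zero => rfl
  | succ k ih => rw [holderMeans_succ, holderMeans_succ, ih, cesaroMean_neg]

lemma cesaroMean_mono {u v : ℕ → ℝ} (h : u ≤ v) : cesaroMean u ≤ cesaroMean v := fun n =>
  div_le_div_of_nonneg_right (sum_le_sum fun i _ => h i) n.cast_nonneg

lemma Filter.Tendsto.cesaroMean {u : ℕ → ℝ} {l : ℝ} (h : Tendsto u atTop (𝓝 l)) :
    Tendsto (cesaroMean u) atTop (𝓝 l) := by
  have key : ∀ n, _root_.cesaroMean u n = (n : ℝ)⁻¹ * ∑ i ∈ range n, u (i + 1) := fun n => by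
    rw [_root_.cesaroMean, range_eq_Ico, sum_Ico_add', div_eq_inv_mul]
    rfl
  rw [funext key]
  exact (h.comp (tendsto_add_atTop_nat 1)).cesaro

lemma limsup_cesaroMean_le {u : ℕ → ℝ} {C : ℝ} (hu : ∀ n, |u n| ≤ C) :
    limsup (cesaroMean u) atTop ≤ limsup u atTop := by
  refine le_of_forall_pos_le_add fun d hd => ?_
  set L := limsup u atTop
  -- `max u (L + d)` is eventually constant and dominates `u`.
  have hev : ∀ᶠ n in atTop, max (u n) (L + d) = L + d :=
    (eventually_lt_of_limsup_lt (lt_add_of_pos_right L hd)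
      (isBoundedUnder_le_and_ge_of_abs_le hu).1).mono
      fun n hn => max_eq_right hn.le
  have hlim := (tendsto_const_nhds.congr' (EventuallyEq.symm hev)).cesaroMean
  calc limsup (cesaroMean u) atTop
      ≤ limsup (cesaroMean fun n => max (u n) (L + d)) atTop :=
        limsup_le_limsup (Eventually.of_forall (cesaroMean_mono fun n => le_max_left _ _))
          (isBoundedUnder_le_and_ge_of_abs_le (abs_cesaroMean_le hu)).2.isCoboundedUnder_le
          hlim.isBoundedUnder_le
    _ = L + d := hlim.limsup_eq

lemma limsup_holderMeans_le {b : ℕ → ℝ} {C : ℝ} (hb : ∀ n, |b n| ≤ C) (k : ℕ) :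
    limsup (holderMeans b k) atTop ≤ limsup b atTop := by
  induction k with
  | zero => rfl
  | succ k ih => exact (limsup_cesaroMean_le (abs_holderMeans_le hb k)).trans ih

lemma iSup_liminf_holderMeans_mem_Icc {b : ℕ → ℝ} {C : ℝ} (hb : ∀ n, |b n| ≤ C) :
    (⨆ k, liminf (holderMeans b k) atTop) ∈ Set.Icc (liminf b atTop) (limsup b atTop) := by
  have hle : ∀ k, liminf (holderMeans b k) atTop ≤ limsup b atTop := fun k =>
    (liminf_le_limsup (isBoundedUnder_le_and_ge_of_abs_le (abs_holderMeans_le hb k)).1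
      (isBoundedUnder_le_and_ge_of_abs_le (abs_holderMeans_le hb k)).2).trans
      (limsup_holderMeans_le hb k)
  exact ⟨le_ciSup (f := fun k => liminf (holderMeans b k) atTop)
    ⟨_, Set.forall_mem_range.2 hle⟩ 0, ciSup_le hle⟩

lemma le_cesaroMean_of_le_on_Ioc {u : ℕ → ℝ} {C c : ℝ} {p n : ℕ} (hC : ∀ i, -C ≤ u i)
    (hc : ∀ i ∈ Ioc p n, c ≤ u i) (hpn : p ≤ n) (hn : 0 < n) :
    c - p * (c + C) / n ≤ cesaroMean u n := by
  have hsplit : ∑ i ∈ Icc 1 n, u i = ∑ i ∈ Ioc 0 p, u i + ∑ i ∈ Ioc p n, u i := by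
    rw [sum_Ioc_consecutive _ p.zero_le hpn, ← Icc_add_one_left_eq_Ioc, zero_add]
  have hhead : -(p * C) ≤ ∑ i ∈ Ioc 0 p, u i := by
    simpa using card_nsmul_le_sum (Ioc 0 p) u (-C) fun i _ => hC i
  have htail : (n - p) * c ≤ ∑ i ∈ Ioc p n, u i := by
    simpa [Nat.cast_sub hpn] using card_nsmul_le_sum (Ioc p n) u c hc
  have hn' : (0 : ℝ) < n := Nat.cast_pos.2 hn
  calc c - p * (c + C) / n = ((n - p) * c + -(p * C)) / n := by field_simp; ring
    _ ≤ cesaroMean u n := by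
      rw [cesaroMean, hsplit]
      exact div_le_div_of_nonneg_right (by linarith) hn'.le

def LongStretches (P : ℕ → Prop) : Prop :=
  ∀ R : ℕ, ∃ᶠ p in atTop, ∀ m ∈ Ioc p (R * p), P m

lemma forall_mem_Ioc_mul_of_le {P : ℕ → Prop} {R R' p : ℕ} (hR : R' ≤ R)
    (h : ∀ m ∈ Ioc p (R * p), P m) : ∀ m ∈ Ioc p (R' * p), P m := fun m hm =>
  h m (Ioc_subset_Ioc_right (Nat.mul_le_mul_right p hR) hm)

namespace LongStretches

variable {P Q : ℕ → Prop}

lemma mono (h : LongStretches P) (hPQ : ∀ m, P m → Q m) : LongStretches Q := fun R =>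
  (h R).mono fun _ hp m hm => hPQ m (hp m hm)

lemma frequently (h : LongStretches P) : ∃ᶠ m in atTop, P m :=
  (tendsto_add_atTop_nat 1).frequently <|
    ((h 2).and_eventually (eventually_ge_atTop 1)).mono fun p hp =>
      hp.1 (p + 1) (mem_Ioc.2 ⟨p.lt_succ_self, by omega⟩)

lemma of_frequently_or
    (h : ∀ R : ℕ, ∃ᶠ p in atTop, (∀ m ∈ Ioc p (R * p), P m) ∨ ∀ m ∈ Ioc p (R * p), Q m) :
    LongStretches P ∨ LongStretches Q := by
  refine or_iff_not_imp_left.2 fun hP => ?_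
  obtain ⟨R₀, hR₀⟩ : ∃ R₀ : ℕ, ¬∃ᶠ p in atTop, ∀ m ∈ Ioc p (R₀ * p), P m := by
    simpa [LongStretches] using hP
  intro R
  rcases frequently_or_distrib.1 (h (max R R₀)) with hP' | hQ'
  · exact absurd (hP'.mono fun p => forall_mem_Ioc_mul_of_le (le_max_right R R₀)) hR₀
  · exact hQ'.mono fun p => forall_mem_Ioc_mul_of_le (le_max_left R R₀)

variable {c C δ : ℝ}

lemma cesaroMean {u : ℕ → ℝ} (hu : ∀ n, |u n| ≤ C) (h : LongStretches (c ≤ u ·))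
    (hδ : 0 < δ) : LongStretches (c - δ ≤ _root_.cesaroMean u ·) := by
  intro R
  -- at `m > M p` the head `[1, p]` of the stretch `(p, R M p]` weighs at most `2 C / M` in the mean
  set M := ⌈2 * C / δ⌉₊ + 1
  have hM0 : 0 < M := Nat.succ_pos _
  have hM : 2 * C ≤ δ * M := by
    rw [← div_le_iff₀' hδ]
    exact (Nat.le_ceil _).trans (by exact_mod_cast Nat.le_succ _)
  have hMp : Tendsto (M * ·) atTop atTop :=
    tendsto_atTop_mono (fun p => Nat.le_mul_of_pos_left p hM0) tendsto_id
  refine hMp.frequently ((h (R * M)).mono fun p hp m hm => ?_)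
  obtain ⟨hMpm, hmR⟩ := mem_Ioc.1 hm
  have hpm : p < m := (Nat.le_mul_of_pos_left p hM0).trans_lt hMpm
  have hc : ∀ i ∈ Ioc p m, c ≤ u i := fun i hi =>
    hp i (Ioc_subset_Ioc_right (hmR.trans (by rw [mul_assoc])) hi)
  have hcC : c ≤ C := (hc m (mem_Ioc.2 ⟨hpm, le_rfl⟩)).trans ((le_abs_self _).trans (hu m))
  have hm0 : (0 : ℝ) < m := by exact_mod_cast (Nat.zero_le p).trans_lt hpm
  have hloss : p * (c + C) / m ≤ δ := by
    rw [div_le_iff₀ hm0]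
    calc (p : ℝ) * (c + C) ≤ p * (2 * C) := by gcongr; linarith
      _ ≤ p * (δ * M) := by gcongr
      _ = δ * (M * p : ℕ) := by push_cast; ring
      _ ≤ δ * m := by gcongr
  linarith [le_cesaroMean_of_le_on_Ioc (fun i => (abs_le.1 (hu i)).1) hc hpm.le (by omega)]

lemma holderMeans {b : ℕ → ℝ} (hb : ∀ n, |b n| ≤ C) (h : LongStretches (c ≤ b ·)) (k : ℕ)
    (hδ : 0 < δ) : LongStretches (c - δ ≤ _root_.holderMeans b k ·) := by
  induction k generalizing δ with
  | zero => exact h.mono fun m hm => by simp only [_root_.holderMeans]; linarith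
  | succ k ih =>
    exact ((ih (half_pos hδ)).cesaroMean (abs_holderMeans_le hb k) (half_pos hδ)).mono
      fun m hm => by rw [holderMeans_succ]; linarith

lemma le_limsup_holderMeans {b : ℕ → ℝ} (hb : ∀ n, |b n| ≤ C) (h : LongStretches (c ≤ b ·))
    (k : ℕ) : c ≤ limsup (_root_.holderMeans b k) atTop :=
  le_of_forall_pos_le_add fun _ hδ => sub_le_iff_le_add.1 <|
    le_limsup_of_frequently_le (h.holderMeans hb k hδ).frequently
      (isBoundedUnder_le_and_ge_of_abs_le (abs_holderMeans_le hb k)).1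

lemma liminf_holderMeans_le {b : ℕ → ℝ} (hb : ∀ n, |b n| ≤ C) (h : LongStretches (b · ≤ c))
    (k : ℕ) : liminf (_root_.holderMeans b k) atTop ≤ c := by
  have hneg : LongStretches (-c ≤ -b ·) := h.mono fun m => neg_le_neg
  refine le_of_forall_pos_le_add fun δ hδ => liminf_le_of_frequently_le ?_
    (isBoundedUnder_le_and_ge_of_abs_le (abs_holderMeans_le hb k)).2
  refine (hneg.holderMeans (fun n => (abs_neg (b n)).trans_le (hb n)) k hδ).frequently.mono
    fun m hm => ?_
  rw [holderMeans_neg] at hm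
  linarith

end LongStretches

lemma tendsto_birk_succ_sub_birk {a : ℕ → ℝ} {C : ℝ} (ha : ∀ n, |a n| ≤ C) :
    Tendsto (fun n => birk a (n + 1) - birk a n) atTop (𝓝 0) := by
  have hstep : ∀ n : ℕ, |birk a (n + 1) - birk a n| ≤ 2 * C / (n + 1 : ℕ) := fun n => by
    have hdiff : birk a (n + 1) - birk a n = (a n - birk a n) / (n + 1 : ℕ) := by
      rcases n.eq_zero_or_pos with rfl | hn
      · simp [birk]
      · have : (n : ℝ) ≠ 0 := by positivity
        simp only [birk, sum_range_succ]
        push_cast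
        field_simp
        ring
    rw [hdiff, abs_div, Nat.abs_cast]
    gcongr
    exact (abs_sub _ _).trans (by linarith [ha n, abs_birk_le ha n])
  exact squeeze_zero_norm hstep
    ((tendsto_const_div_atTop_nhds_zero_nat (2 * C)).comp (tendsto_add_atTop_nat 1))

lemma forall_le_on_Ioc_of_small_steps {f : ℕ → ℝ} {lo hi : ℝ} {p q : ℕ}
    (hstep : ∀ n, p < n → |f (n + 1) - f n| < hi - lo)
    (hgap : ∀ m ∈ Ioc p q, f m ≤ lo ∨ hi ≤ f m) (hstart : f (p + 1) ≤ lo) :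
    ∀ m ∈ Ioc p q, f m ≤ lo := by
  intro m hm
  obtain ⟨hpm, hmq⟩ := mem_Ioc.1 hm
  clear hm
  induction m, hpm using Nat.le_induction with
  | base => exact hstart
  | succ m hpm ih =>
    refine (hgap (m + 1) (mem_Ioc.2 ⟨by omega, hmq⟩)).resolve_right fun hhi => ?_
    have := (abs_lt.1 (hstep m hpm)).2
    linarith [ih (by omega)]

lemma forall_le_or_forall_ge_on_Ioc_of_small_steps {f : ℕ → ℝ} {lo hi : ℝ} {p q : ℕ}
    (hstep : ∀ n, p < n → |f (n + 1) - f n| < hi - lo)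
    (hgap : ∀ m ∈ Ioc p q, f m ≤ lo ∨ hi ≤ f m) :
    (∀ m ∈ Ioc p q, f m ≤ lo) ∨ ∀ m ∈ Ioc p q, hi ≤ f m := by
  rcases le_or_gt q p with hqp | hpq
  · exact .inl fun m hm => absurd hqp (not_le.2 ((mem_Ioc.1 hm).1.trans_le (mem_Ioc.1 hm).2))
  rcases hgap (p + 1) (mem_Ioc.2 ⟨p.lt_succ_self, hpq⟩) with hlo | hhi
  · exact .inl (forall_le_on_Ioc_of_small_steps hstep hgap hlo)
  · refine .inr fun m hm => neg_le_neg_iff.1 <|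
      forall_le_on_Ioc_of_small_steps (f := (-f ·)) (lo := -hi) (hi := -lo)
        (fun n hn => by simp only [neg_sub_neg]; rw [abs_sub_comm]; exact hstep n hn)
        (fun m hm => (hgap m hm).symm.imp neg_le_neg neg_le_neg) (neg_le_neg hhi) m hm

lemma frequently_forall_Ioc_not_of_limsup_nth_ratio_eq_top {P : ℕ → Prop}
    (h : limsup (fun i : ℕ => (((Nat.nth P (i + 1) : ℝ) / (Nat.nth P i : ℝ) : ℝ) : EReal))
      atTop = ⊤) (R : ℕ) :
    ∃ᶠ p in atTop, ∀ m ∈ Ioc p (R * p), ¬P m := by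
  have hfreq (r : ℝ) : ∃ᶠ i in atTop, r < (Nat.nth P (i + 1) : ℝ) / Nat.nth P i :=
    (frequently_lt_of_lt_limsup (by isBoundedDefault) (h ▸ EReal.coe_lt_top r)).mono
      fun _ hi => EReal.coe_lt_coe_iff.1 hi
  -- if `P` held only finitely often, `nth P` would eventually vanish, and so would the ratios
  have hinf : (Set.ofPred P).Infinite := fun hfin => by
    obtain ⟨i, hi, hzero⟩ := ((hfreq 0).and_eventually
      (eventually_atTop.2 ⟨_, fun i => Nat.nth_of_card_le hfin⟩)).exists
    simp [hzero] at hi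
  refine (Nat.nth_strictMono hinf).tendsto_atTop.frequently ((hfreq R).mono fun i hi m hm hPm => ?_)
  obtain ⟨hlo, hhi⟩ := mem_Ioc.1 hm
  have hpos : 0 < Nat.nth P i := Nat.pos_of_ne_zero fun h0 => by rw [h0, mul_zero] at hhi; omega
  have hnext : R * Nat.nth P i < Nat.nth P (i + 1) := by
    exact_mod_cast (lt_div_iff₀ (Nat.cast_pos.2 hpos)).1 hi
  exact absurd (Nat.le_nth_of_lt_nth_succ (hhi.trans_lt hnext) hPm) (not_le.2 hlo)

lemma longStretches_above_or_below_of_return_ratios {a : ℕ → ℝ} {C γ ε : ℝ}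
    (ha : ∀ n, |a n| ≤ C) (hε : 0 < ε)
    (h : limsup (fun i : ℕ => (((returnTimes (birk a) γ ε (i + 1) : ℝ) /
      (returnTimes (birk a) γ ε i : ℝ) : ℝ) : EReal)) atTop = ⊤) :
    LongStretches (γ + ε ≤ birk a ·) ∨ LongStretches (birk a · ≤ γ - ε) := by
  obtain ⟨N, hN⟩ := Metric.tendsto_atTop.1 (tendsto_birk_succ_sub_birk ha) (2 * ε) (by positivity)
  refine (LongStretches.of_frequently_or fun R => ?_).symm
  refine ((frequently_forall_Ioc_not_of_limsup_nth_ratio_eq_top h R).and_eventually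
    (eventually_ge_atTop N)).mono fun p ⟨hret, hpN⟩ => ?_
  refine forall_le_or_forall_ge_on_Ioc_of_small_steps (fun n hn => ?_) fun m hm => ?_
  · simpa [Real.dist_eq, two_mul] using hN n (by omega)
  · by_contra! hin
    exact hret m hm ⟨(Nat.zero_le p).trans_lt (mem_Ioc.1 hm).1, hin.1, hin.2⟩

theorem type_B2_of_unbounded_return_ratios_general (a : ℕ → ℝ)
    (hbdd : ∃ C : ℝ, ∀ n, |a n| ≤ C)
    (h : ∀ γ ∈ Set.Icc (liminf (birk a) atTop) (limsup (birk a) atTop), ∃ ε : ℝ, 0 < ε ∧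
      limsup (fun i : ℕ => (((returnTimes (birk a) γ ε (i + 1) : ℝ) /
        (returnTimes (birk a) γ ε i : ℝ) : ℝ) : EReal)) atTop = ⊤) :
    (⨆ k : ℕ, liminf (fun n : ℕ => holderMeans (birk a) k n) atTop) <
      ⨅ k : ℕ, limsup (fun n : ℕ => holderMeans (birk a) k n) atTop := by
  obtain ⟨C, ha⟩ := hbdd
  have hB := abs_birk_le ha
  obtain ⟨ε, hε, hret⟩ := h _ (iSup_liminf_holderMeans_mem_Icc hB)
  rcases longStretches_above_or_below_of_return_ratios ha hε hret with habove | hbelow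
  · exact (lt_add_of_pos_right _ hε).trans_le
      (le_ciInf fun k => habove.le_limsup_holderMeans hB k)
  · have := ciSup_le fun k => hbelow.liminf_holderMeans_le hB k
    linarith

/-- **Theorem 2, part 2.**  Let `a` be bounded with divergent Birkhoff averages
`B_n`, with cluster set `[α₀, β₀]`.  If for every `γ ∈ [α₀, β₀]` there is `ε > 0`
such that `limsup_i n_{i+1}(γ, ε) / n_i(γ, ε) = ∞`, then `⋂_k [α_k, β_k]` is a
nondegenerate interval, i.e. `sup_k α_k < inf_k β_k` (type B2). -/
theorem type_B2_of_unbounded_return_ratios (a : ℕ → ℝ)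
    (hbdd : ∃ C : ℝ, ∀ n, |a n| ≤ C)
    (hdiv : ¬ ∃ L : ℝ, Tendsto (birk a) atTop (𝓝 L))
    (h : ∀ γ ∈ Set.Icc (liminf (birk a) atTop) (limsup (birk a) atTop), ∃ ε : ℝ, 0 < ε ∧
      limsup (fun i : ℕ => (((returnTimes (birk a) γ ε (i + 1) : ℝ) /
        (returnTimes (birk a) γ ε i : ℝ) : ℝ) : EReal)) atTop = ⊤) :
    (⨆ k : ℕ, liminf (fun n : ℕ => holderMeans (birk a) k n) atTop) <
      ⨅ k : ℕ, limsup (fun n : ℕ => holderMeans (birk a) k n) atTop :=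
  type_B2_of_unbounded_return_ratios_general a hbdd h
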